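/- If ∑_{n∈ℕ} aₙ diverges and f : ℕ_{aₙ} → ℕ_{bₙ} is continuous and non-constant, then the image f(ℕ) is dense in ℕ_{bₙ}; in particular f(ℕ) is infinite. -/

import Mathlib

/-!
If `∑ aₙ` diverges, `ℕ_{aₙ}` is connected: a proper clopen set and its complement would both
be closed proper sets, hence of finite sum, and so would `ℕ`. In `ℕ_{bₙ}` every subset of a set
of finite sum is closed, so a connected set of finite sum has at most one point. The range of `f` is
connected and not a point, so it has infinite sum: it is not finite and lies in no proper
closed set.
-/

open Set Filter Topology

/-- The topology on `ℕ` whose closed sets are `{A | ∑_{n ∈ A} a n < ∞} ∪ {univ}`. -/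
noncomputable def seriesTopology (a : ℕ → ℝ) : TopologicalSpace ℕ :=
  TopologicalSpace.ofClosed {A : Set ℕ | Summable (A.indicator a) ∨ A = Set.univ}
    (Or.inl (by rw [Set.indicator_empty]; exact summable_zero))
    (fun 𝒮 h𝒮 => by
      by_cases h : ∃ A ∈ 𝒮, Summable (A.indicator a)
      · obtain ⟨A, hA, hsum⟩ := h
        left
        have hsub : ⋂₀ 𝒮 ⊆ A := Set.sInter_subset_of_mem hA
        have h2 := hsum.indicator (⋂₀ 𝒮)
        rwa [Set.indicator_indicator, Set.inter_eq_self_of_subset_left hsub] at h2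
      · right
        push_neg at h
        rw [Set.sInter_eq_univ]
        intro A hA
        rcases h𝒮 hA with hs | h1
        · exact absurd hs (h A hA)
        · exact h1)
    (fun A hA B hB => by
      rcases hA with hA | rfl
      · rcases hB with hB | rfl
        · left
          have hBA : Summable ((B \ A).indicator a) := by
            have h2 := hB.indicator (B \ A)
            rwa [Set.indicator_indicator,
              Set.inter_eq_self_of_subset_left Set.diff_subset] at h2
          have hsum := hA.add hBA
          have heq : (A ∪ B).indicator a = A.indicator a + (B \ A).indicator a := by
            rw [← Set.union_diff_self,
              Set.indicator_union_of_disjoint disjoint_sdiff_self_right]; rfl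
          rw [heq, Pi.add_def]; exact hsum
        · right; rw [Set.union_univ]
      · right; rw [Set.univ_union])

theorem Set.Finite.summable_indicator {α β : Type*} [AddCommMonoid β] [TopologicalSpace β]
    {s : Set α} (hs : s.Finite) (f : α → β) : Summable (s.indicator f) :=
  summable_of_hasFiniteSupport (hs.subset support_indicator_subset)

theorem Summable.indicator_of_subset {α E : Type*} [UniformSpace E] [AddCommGroup E]
    [IsUniformAddGroup E] [CompleteSpace E] {f : α → E} {s t : Set α}
    (ht : Summable (t.indicator f)) (hst : s ⊆ t) : Summable (s.indicator f) := by
  simpa [indicator_indicator, inter_eq_left.2 hst] using ht.indicator s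

section SeriesTopology

variable {a : ℕ → ℝ}

theorem isClosed_seriesTopology_iff {s : Set ℕ} :
    IsClosed[seriesTopology a] s ↔ Summable (s.indicator a) ∨ s = univ := by
  rw [← @isOpen_compl_iff ℕ s (seriesTopology a)]
  change sᶜᶜ ∈ _ ↔ _
  rw [compl_compl]
  rfl

theorem isClosed_seriesTopology_of_summable {s : Set ℕ} (hs : Summable (s.indicator a)) :
    IsClosed[seriesTopology a] s :=
  isClosed_seriesTopology_iff.2 (Or.inl hs)

theorem preconnectedSpace_seriesTopology (ha : ¬ Summable a) :
    @PreconnectedSpace ℕ (seriesTopology a) := by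
  let := seriesTopology a
  refine preconnectedSpace_iff_clopen.2 fun s hs => or_iff_not_imp_left.2 fun hs_ne => ?_
  refine (isClosed_seriesTopology_iff.1 hs.isClosed).resolve_left fun hs_sum => ?_
  have hsc_sum : Summable (sᶜ.indicator a) :=
    (isClosed_seriesTopology_iff.1 hs.isOpen.isClosed_compl).resolve_right
      fun h => hs_ne (compl_univ_iff.1 h)
  exact ha (s.indicator_self_add_compl a ▸ hs_sum.add hsc_sum)

theorem IsPreconnected.subsingleton_of_summable_indicator {s : Set ℕ}
    (hs : @IsPreconnected ℕ (seriesTopology a) s) (hs_sum : Summable (s.indicator a)) :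
    s.Subsingleton := by
  let := seriesTopology a
  intro x hx y hy
  by_contra hxy
  obtain ⟨z, -, hzx, -, hzx'⟩ := isPreconnected_closed_iff.1 hs {x} (s \ {x})
    (isClosed_seriesTopology_of_summable ((finite_singleton x).summable_indicator a))
    (isClosed_seriesTopology_of_summable (hs_sum.indicator_of_subset sdiff_subset))
    (by simp) ⟨x, hx, rfl⟩ ⟨y, hy, hy, Ne.symm hxy⟩
  exact hzx' hzx

theorem not_summable_indicator_range {b : ℕ → ℝ} (ha : ¬ Summable a) {f : ℕ → ℕ}
    (hf : Continuous[seriesTopology a, seriesTopology b] f) (hf_nc : ¬ ∃ c, ∀ n, f n = c) :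
    ¬ Summable ((range f).indicator b) := fun hsum =>
  have hrange := @isPreconnected_range _ _ (seriesTopology a) (seriesTopology b)
    (preconnectedSpace_seriesTopology ha) f hf
  hf_nc ⟨f 0, fun n => hrange.subsingleton_of_summable_indicator hsum (mem_range_self n)
    (mem_range_self 0)⟩

end SeriesTopology

theorem image_dense_of_nonconstant_continuous_general (a b : ℕ → ℝ)
    (hdiv : ¬ Summable a)
    (f : ℕ → ℕ) (hf : @Continuous ℕ ℕ (seriesTopology a) (seriesTopology b) f)
    (hnc : ¬ ∃ c, ∀ n, f n = c) :
    @Dense ℕ (seriesTopology b) (Set.range f) ∧ (Set.range f).Infinite := by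
  have hrange := not_summable_indicator_range hdiv hf hnc
  let := seriesTopology b
  have hclosure : closure (range f) = univ :=
    (isClosed_seriesTopology_iff.1 isClosed_closure).resolve_left
      fun h => hrange (h.indicator_of_subset subset_closure)
  exact ⟨dense_iff_closure_eq.2 hclosure, fun hfin => hrange (hfin.summable_indicator b)⟩

/-- If `∑ aₙ` diverges and `f : ℕ_{aₙ} → ℕ_{bₙ}` is continuous and non-constant,
then the image of `f` is dense in `ℕ_{bₙ}`; in particular it is infinite. -/
theorem image_dense_of_nonconstant_continuous (a b : ℕ → ℝ)
    (ha : ∀ n, 0 < a n) (hb : ∀ n, 0 < b n) (hdiv : ¬ Summable a)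
    (f : ℕ → ℕ) (hf : @Continuous ℕ ℕ (seriesTopology a) (seriesTopology b) f)
    (hnc : ¬ ∃ c, ∀ n, f n = c) :
    @Dense ℕ (seriesTopology b) (Set.range f) ∧ (Set.range f).Infinite :=
  image_dense_of_nonconstant_continuous_general a b hdiv f hf hnc
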